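/- arXiv:0804.0010 — 11 statements merged into one kernel-verified Lean document; each statement's English description precedes it below -/
import Mathlib

section
/- Let a, b, c be positive integers satisfying the strict triangle inequalities a < b + c, b < a + c, c < a + b, and let A be the area of the triangle with side lengths a, b, c. If A is a rational number, then A is an even positive integer (i.e., there exists a positive integer k with A = 2k). -/
lemma zmod4_key : ∀ x y z t : ZMod 4, (x = 1 ∨ x = 3) → (y = 1 ∨ y = 3) →
    (z = 1 ∨ z = 3) → t * t ≠ (x + y + z) * (x * y * z) := by decide

lemma odd_zmod4 (x : ℤ) (hx : Odd x) : (x : ZMod 4) = 1 ∨ (x : ZMod 4) = 3 := by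
  obtain ⟨m, rfl⟩ := hx
  have h : ((2 * m + 1 : ℤ) : ZMod 4) = 2 * (m : ZMod 4) + 1 := by push_cast; ring
  rw [h]
  have : ∀ u : ZMod 4, 2 * u + 1 = 1 ∨ 2 * u + 1 = 3 := by decide
  exact this _

lemma contra_case (x y z t : ℤ) (hx : Odd x) (hy : Odd y) (hz : Odd z)
    (ht : t ^ 2 = (x + y + z) * (x * y * z)) : False := by
  apply zmod4_key (x : ZMod 4) (y : ZMod 4) (z : ZMod 4) (t : ZMod 4)
    (odd_zmod4 x hx) (odd_zmod4 y hy) (odd_zmod4 z hz)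
  have h := congrArg (fun n : ℤ => (n : ZMod 4)) ht
  push_cast at h
  rw [sq] at h
  exact h

lemma int_key (x y z t : ℤ) (hxy : Even (x + y)) (hyz : Even (y + z))
    (ht : t ^ 2 = (x + y + z) * (x * y * z)) (htpos : 0 < t) :
    ∃ k : ℤ, 0 < k ∧ t = 8 * k := by
  rcases Int.even_or_odd x with hx | hx
  · -- all even
    have hy : Even y := by rcases hxy with ⟨n, hn⟩; rcases hx with ⟨m, hm⟩
                           exact ⟨n - m, by omega⟩
    have hz : Even z := by rcases hyz with ⟨n, hn⟩; rcases hy with ⟨m, hm⟩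
                           exact ⟨n - m, by omega⟩
    obtain ⟨u, hu⟩ := hx; obtain ⟨v, hv⟩ := hy; obtain ⟨w, hw⟩ := hz
    have ht16 : t ^ 2 = 16 * ((u + v + w) * (u * v * w)) := by
      rw [ht]; subst hu hv hw; ring
    have h2t : (2 : ℤ) ∣ t := by
      have : Even (t * t) := ⟨8 * ((u+v+w)*(u*v*w)), by nlinarith [ht16]⟩
      rcases (Int.even_mul.mp this) with h | h <;> exact h.two_dvd
    obtain ⟨r, hr⟩ := h2t
    have hr2 : r ^ 2 = 4 * ((u + v + w) * (u * v * w)) := by nlinarith [ht16]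
    have h2r : (2 : ℤ) ∣ r := by
      have : Even (r * r) := ⟨2 * ((u+v+w)*(u*v*w)), by nlinarith [hr2]⟩
      rcases (Int.even_mul.mp this) with h | h <;> exact h.two_dvd
    obtain ⟨A, hA⟩ := h2r
    have hA2 : A ^ 2 = (u + v + w) * (u * v * w) := by nlinarith [hr2]
    rcases Int.even_or_odd A with hAe | hAo
    · obtain ⟨k, hk⟩ := hAe
      exact ⟨k, by omega, by omega⟩
    · exfalso
      have hodd : Odd ((u + v + w) * (u * v * w)) := by rw [← hA2]; exact hAo.pow
      have huvw : Odd (u * v * w) := (Int.odd_mul.mp hodd).2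
      have hu' : Odd u := (Int.odd_mul.mp (Int.odd_mul.mp huvw).1).1
      have hv' : Odd v := (Int.odd_mul.mp (Int.odd_mul.mp huvw).1).2
      have hw' : Odd w := (Int.odd_mul.mp huvw).2
      exact contra_case u v w A hu' hv' hw' hA2
  · -- all odd: contradiction
    have hy : Odd y := by rcases hxy with ⟨n, hn⟩; rcases hx with ⟨m, hm⟩
                          exact ⟨n - m - 1, by omega⟩
    have hz : Odd z := by rcases hyz with ⟨n, hn⟩; rcases hy with ⟨m, hm⟩
                          exact ⟨n - m - 1, by omega⟩
    exact absurd ht (fun h => contra_case x y z t hx hy hz h)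

/-- Heron's formula: the area of a triangle with side lengths `a`, `b`, `c`. -/
noncomputable def heronArea (a b c : ℕ) : ℝ :=
  Real.sqrt (((a + b + c : ℝ) / 2) * ((a + b + c : ℝ) / 2 - a) *
    ((a + b + c : ℝ) / 2 - b) * ((a + b + c : ℝ) / 2 - c))

theorem stmt_0 (a b c : ℕ) (ha : 0 < a) (hb : 0 < b) (hc : 0 < c)
    (h1 : a < b + c) (h2 : b < a + c) (h3 : c < a + b)
    (hrat : ∃ q : ℚ, heronArea a b c = (q : ℝ)) :
    ∃ k : ℕ, 0 < k ∧ heronArea a b c = ((2 * k : ℕ) : ℝ) := by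
  set x : ℤ := (b : ℤ) + c - a with hxdef
  set y : ℤ := (a : ℤ) + c - b with hydef
  set z : ℤ := (a : ℤ) + b - c with hzdef
  set N : ℤ := (x + y + z) * (x * y * z) with hNdef
  have hxp : 0 < x := by omega
  have hyp : 0 < y := by omega
  have hzp : 0 < z := by omega
  have hNp : 0 < N := by positivity
  have hform : heronArea a b c = Real.sqrt ((N : ℝ) / 16) := by
    unfold heronArea
    congr 1
    push_cast [hNdef, hxdef, hydef, hzdef]
    ring
  obtain ⟨q, hq⟩ := hrat
  have hqnn : 0 ≤ (q : ℝ) := by rw [← hq, hform]; exact Real.sqrt_nonneg _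
  have hq2 : ((q : ℝ)) ^ 2 = (N : ℝ) / 16 := by
    rw [← hq, hform, Real.sq_sqrt]
    positivity
  have h4q : ((4 * q : ℚ) : ℝ) ^ 2 = ((N : ℤ) : ℝ) := by push_cast; nlinarith [hq2]
  have hnotirr : ¬ Irrational ((4 * q : ℚ) : ℝ) := Rat.not_irrational _
  have hex : ∃ t : ℤ, ((4 * q : ℚ) : ℝ) = t := by
    by_contra hcon
    exact hnotirr (irrational_nrt_of_notint_nrt 2 N h4q hcon (by norm_num))
  obtain ⟨t, htq⟩ := hex
  have ht2 : t ^ 2 = N := by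
    have := h4q
    rw [htq] at this
    exact_mod_cast this
  have htpos : 0 < t := by
    have htnn : (0:ℝ) ≤ (t:ℝ) := by
      rw [← htq]; push_cast; linarith [hqnn]
    have : t ≠ 0 := by rintro rfl; simp at ht2; omega
    exact lt_of_le_of_ne (by exact_mod_cast htnn) (Ne.symm this)
  obtain ⟨k, hkpos, hk⟩ := int_key x y z t ⟨c, by omega⟩ ⟨a, by omega⟩ ht2 htpos
  refine ⟨k.toNat, by omega, ?_⟩
  rw [hq]
  have hqk : (q : ℝ) = 2 * (k : ℝ) := by
    have h4 : ((4 * q : ℚ) : ℝ) = ((8 * k : ℤ) : ℝ) := by rw [htq, hk]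
    push_cast at h4
    linarith
  rw [hqk]
  have hkt : ((k.toNat : ℕ) : ℝ) = (k : ℝ) := by
    exact_mod_cast congrArg (fun n : ℤ => (n : ℝ)) (Int.toNat_of_nonneg (le_of_lt hkpos))
  push_cast
  rw [hkt]
end

section
/- Let a, b, c be positive integers satisfying the strict triangle inequalities a < b + c, b < a + c, c < a + b, and let A be the area of the triangle with side lengths a, b, c. If A is a rational number, then A is a positive integer divisible by 3. -/
set_option maxHeartbeats 4000000 in
lemma heron_mod16 : ∀ a b c m : ZMod 16,
    m ^ 2 = (a + b + c) * (b + c - a) * (a - b + c) * (a + b - c) → m ^ 2 = 0 := by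
  decide

lemma heron_mod3 : ∀ a b c m : ZMod 3,
    m ^ 2 = (a + b + c) * (b + c - a) * (a - b + c) * (a + b - c) → m = 0 := by
  decide

theorem stmt_1 (a b c : ℕ) (ha : 0 < a) (hb : 0 < b) (hc : 0 < c)
    (h1 : a < b + c) (h2 : b < a + c) (h3 : c < a + b)
    (hrat : ∃ q : ℚ, heronArea a b c = (q : ℝ)) :
    ∃ k : ℕ, 0 < k ∧ heronArea a b c = (k : ℝ) ∧ 3 ∣ k := by
  obtain ⟨q, hq⟩ := hrat
  -- the integer 16 A^2
  set NZ : ℤ := (a + b + c) * (b + c - a) * (a - b + c) * (a + b - c) with hNZ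
  have hP : ((a + b + c : ℝ) / 2) * ((a + b + c : ℝ) / 2 - a) *
      ((a + b + c : ℝ) / 2 - b) * ((a + b + c : ℝ) / 2 - c) = (NZ : ℝ) / 16 := by
    simp only [hNZ]
    push_cast
    ring
  have hNZpos : 0 < NZ := by
    have h1' : (a : ℤ) < b + c := by exact_mod_cast h1
    have h2' : (b : ℤ) < a + c := by exact_mod_cast h2
    have h3' : (c : ℤ) < a + b := by exact_mod_cast h3
    have : (0 : ℤ) < a + b + c := by positivity
    apply mul_pos (mul_pos (mul_pos this (by omega)) (by omega)) (by omega)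
  have hNR : (0:ℝ) ≤ (NZ : ℝ) / 16 := by positivity
  -- squaring the rationality hypothesis
  have hq0 : (0:ℝ) ≤ (q : ℝ) := by rw [← hq]; exact Real.sqrt_nonneg _
  have hsq : (NZ : ℝ) / 16 = (q : ℝ) ^ 2 := by
    have := Real.sq_sqrt hNR
    rw [heronArea, hP] at hq
    rw [← this, hq]
  have hqq : ((4 * q : ℚ) : ℝ) ^ 2 = (NZ : ℝ) := by
    push_cast
    have h16 : (4 * (q:ℝ)) ^ 2 = 16 * ((q:ℝ) ^ 2) := by ring
    rw [h16, ← hsq]; ring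
  have hQ : (4 * q) ^ 2 = (NZ : ℚ) := by exact_mod_cast hqq
  set t : ℚ := 4 * q with ht
  have hden : t.den = 1 := by
    have h := Rat.mul_self_den t
    have : (t * t) = (NZ : ℚ) := by rw [← hQ]; ring
    rw [this, Rat.den_intCast] at h
    exact Nat.eq_one_of_mul_eq_one_left h.symm
  have htnum : (t.num : ℚ) = t := (Rat.den_eq_one_iff t).mp hden
  have htnn : 0 ≤ t := by
    have : (0:ℝ) ≤ (t : ℝ) := by rw [ht]; push_cast; linarith
    exact_mod_cast this
  set m : ℕ := t.num.toNat with hm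
  have hmZ : (m : ℤ) = t.num := Int.toNat_of_nonneg (Rat.num_nonneg.mpr htnn)
  have hN : (m : ℤ) ^ 2 = NZ := by
    have : ((t.num : ℚ)) ^ 2 = (NZ : ℚ) := by rw [htnum, ← hQ]
    have h2 : (t.num) ^ 2 = NZ := by exact_mod_cast this
    rw [hmZ]; exact h2
  -- 4 ∣ m via mod 16
  have h16 : ((m : ZMod 16)) ^ 2 = 0 := by
    apply heron_mod16 (a : ZMod 16) (b : ZMod 16) (c : ZMod 16)
    have := congrArg (Int.cast : ℤ → ZMod 16) hN
    rw [hNZ] at this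
    push_cast at this
    exact this
  have h4m : 4 ∣ m := by
    have : (16 : ℕ) ∣ m ^ 2 := by
      have : ((m ^ 2 : ℕ) : ZMod 16) = 0 := by push_cast; exact h16
      exact (ZMod.natCast_eq_zero_iff _ _).mp this
    have h42 : (4:ℕ) ^ 2 ∣ m ^ 2 := by norm_num; exact this
    exact (Nat.pow_dvd_pow_iff (by norm_num)).mp h42
  -- 3 ∣ m via mod 3
  have h3m : 3 ∣ m := by
    have h3' : ((m : ZMod 3)) = 0 := by
      apply heron_mod3 (a : ZMod 3) (b : ZMod 3) (c : ZMod 3)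
      have := congrArg (Int.cast : ℤ → ZMod 3) hN
      rw [hNZ] at this
      push_cast at this
      exact this
    exact (ZMod.natCast_eq_zero_iff _ _).mp h3'
  have h12 : 12 ∣ m := by
    have : (4:ℕ).Coprime 3 := by norm_num
    have := this.mul_dvd_of_dvd_of_dvd h4m h3m
    simpa using this
  obtain ⟨j, hj⟩ := h12
  have hmpos : 0 < m := by
    rcases Nat.eq_zero_or_pos m with h | h
    · exfalso; rw [h] at hN; simp at hN; omega
    · exact h
  refine ⟨3 * j, ?_, ?_, ⟨j, rfl⟩⟩
  · omega
  · rw [heronArea, hP]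
    have hm4 : (m : ℝ) = 4 * (3 * j : ℕ) := by push_cast; rw [hj]; push_cast; ring
    have : (NZ : ℝ) / 16 = ((3 * j : ℕ) : ℝ) ^ 2 := by
      have : (NZ : ℝ) = (m : ℝ) ^ 2 := by exact_mod_cast hN.symm
      rw [this, hm4]; ring
    rw [this, Real.sqrt_sq (by positivity)]
end

section
/- Let a, b, c be positive integers satisfying the strict triangle inequalities a < b + c, b < a + c, c < a + b, and let A be the area of the triangle with side lengths a, b, c. If A is a rational number, then the perimeter a + b + c is even; equivalently, the three integers N₁ = −a+b+c, N₂ = a−b+c, N₃ = a+b−c are all even. -/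
instance : DecidablePred (Odd : ZMod 16 → Prop) := fun _ =>
  Fintype.decidableExistsFintype

set_option maxHeartbeats 2000000 in
lemma key_mod16 : ∀ x y z m : ZMod 16, Odd x → Odd y → Odd z →
    (x + y + z) * x * y * z ≠ m ^ 2 := by decide

lemma odd_cast16 {n : ℕ} (h : Odd n) : Odd (n : ZMod 16) := by
  obtain ⟨k, hk⟩ := h
  exact ⟨(k : ZMod 16), by push_cast [hk]; ring⟩

theorem stmt_2 (a b c : ℕ) (ha : 0 < a) (hb : 0 < b) (hc : 0 < c)
    (h1 : a < b + c) (h2 : b < a + c) (h3 : c < a + b)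
    (hrat : ∃ q : ℚ, heronArea a b c = (q : ℝ)) :
    Even (a + b + c) ∧
      Even (b + c - a) ∧ Even (a + c - b) ∧ Even (a + b - c) := by
  set P : ℕ := (a + b + c) * (b + c - a) * (a + c - b) * (a + b - c) with hP
  have hcast : ((a + b + c : ℝ) / 2) * ((a + b + c : ℝ) / 2 - a) *
      ((a + b + c : ℝ) / 2 - b) * ((a + b + c : ℝ) / 2 - c) = (P : ℝ) / 16 := by
    rw [hP]
    push_cast [Nat.cast_sub h1.le, Nat.cast_sub h2.le, Nat.cast_sub h3.le]
    ring
  have harea : heronArea a b c = Real.sqrt P / 4 := by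
    rw [heronArea, hcast, show (16 : ℝ) = 4 ^ 2 by norm_num,
      Real.sqrt_div (by positivity), Real.sqrt_sq (by norm_num)]
  -- √P is rational, hence P is a perfect square
  obtain ⟨q, hq⟩ := hrat
  have hsq : IsSquare P := by
    by_contra hns
    have := irrational_sqrt_natCast_iff.2 hns
    apply this
    rw [harea] at hq
    refine ⟨4 * q, ?_⟩
    push_cast
    field_simp at hq ⊢
    linarith [hq]
  obtain ⟨m, hm⟩ := hsq
  -- parity argument
  have hpar : Even (a + b + c) := by
    by_contra hodd
    rw [Nat.not_even_iff_odd] at hodd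
    have hx : Odd (b + c - a) := by
      rcases hodd with ⟨k, hk⟩; rw [Nat.odd_sub h1.le]
      simp [Nat.even_iff, Nat.odd_iff] at *; omega
    have hy : Odd (a + c - b) := by
      rcases hodd with ⟨k, hk⟩; rw [Nat.odd_sub h2.le]
      simp [Nat.even_iff, Nat.odd_iff] at *; omega
    have hz : Odd (a + b - c) := by
      rcases hodd with ⟨k, hk⟩; rw [Nat.odd_sub h3.le]
      simp [Nat.even_iff, Nat.odd_iff] at *; omega
    have hsum : (b + c - a) + (a + c - b) + (a + b - c) = a + b + c := by omega
    have hm16 : (((b + c - a : ℕ) : ZMod 16) + ((a + c - b : ℕ) : ZMod 16)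
        + ((a + b - c : ℕ) : ZMod 16)) *
        ((b + c - a : ℕ) : ZMod 16) * ((a + c - b : ℕ) : ZMod 16)
        * ((a + b - c : ℕ) : ZMod 16) = (m : ZMod 16) ^ 2 := by
      rw [← Nat.cast_add, ← Nat.cast_add, hsum, ← Nat.cast_mul, ← Nat.cast_mul,
        ← Nat.cast_mul, ← hP, hm]
      push_cast
      ring
    exact key_mod16 _ _ _ _ (odd_cast16 hx) (odd_cast16 hy) (odd_cast16 hz) hm16
  refine ⟨hpar, ?_, ?_, ?_⟩ <;>
    · rw [Nat.even_sub (by omega)]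
      simp [Nat.even_iff] at *; omega
end

section
/- Let a, b, c be positive integers satisfying the strict triangle inequalities a < b + c, b < a + c, c < a + b, let A be the area of the triangle with side lengths a, b, c, and set d = gcd(N₁, N₂, N₃) where N₁ = −a+b+c, N₂ = a−b+c, N₃ = a+b−c. If A is an integer with A ≡ 2 (mod 4), then d ≡ 2 (mod 4). -/
lemma key_gcd (N1 N2 N3 m : ℕ)
    (hE : 16 * m ^ 2 = (N1 + N2 + N3) * N1 * N2 * N3)
    (hm : m % 4 = 2)
    (p12 : N1 % 2 = N2 % 2) (p13 : N1 % 2 = N3 % 2) :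
    Nat.gcd N1 (Nat.gcd N2 N3) % 4 = 2 := by
  -- Step A: all Ni are even
  have e1 : N1 % 2 = 0 := by
    by_contra h
    have h1 : N1 % 2 = 1 := by omega
    have o1 : Odd N1 := Nat.odd_iff.2 h1
    have o2 : Odd N2 := Nat.odd_iff.2 (by omega)
    have o3 : Odd N3 := Nat.odd_iff.2 (by omega)
    have osum : Odd (N1 + N2 + N3) := Nat.odd_iff.2 (by omega)
    have hodd : Odd ((N1 + N2 + N3) * N1 * N2 * N3) := ((osum.mul o1).mul o2).mul o3
    rw [← hE] at hodd
    rw [Nat.odd_iff, Nat.mul_mod] at hodd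
    simp at hodd
  have e2 : N2 % 2 = 0 := by omega
  have e3 : N3 % 2 = 0 := by omega
  obtain ⟨m1, hm1⟩ : ∃ x, N1 = 2 * x := ⟨N1 / 2, by omega⟩
  obtain ⟨m2, hm2⟩ : ∃ x, N2 = 2 * x := ⟨N2 / 2, by omega⟩
  obtain ⟨m3, hm3⟩ : ∃ x, N3 = 2 * x := ⟨N3 / 2, by omega⟩
  -- Step B: the gcd equals twice the gcd of the halves
  have hgcd : Nat.gcd N1 (Nat.gcd N2 N3) = 2 * Nat.gcd m1 (Nat.gcd m2 m3) := by
    rw [hm1, hm2, hm3, Nat.gcd_mul_left, Nat.gcd_mul_left]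
  set g := Nat.gcd m1 (Nat.gcd m2 m3) with hg
  -- Step C: g is odd
  have hgodd : g % 2 = 1 := by
    by_contra h
    have h2g : 2 ∣ g := by omega
    have d1 : 2 ∣ m1 := h2g.trans (Nat.gcd_dvd_left _ _)
    have d2 : 2 ∣ m2 := h2g.trans ((Nat.gcd_dvd_right _ _).trans (Nat.gcd_dvd_left _ _))
    have d3 : 2 ∣ m3 := h2g.trans ((Nat.gcd_dvd_right _ _).trans (Nat.gcd_dvd_right _ _))
    obtain ⟨t1, ht1⟩ := d1
    obtain ⟨t2, ht2⟩ := d2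
    obtain ⟨t3, ht3⟩ := d3
    have hprod : (N1 + N2 + N3) * N1 * N2 * N3
        = 256 * ((t1 + t2 + t3) * (t1 * (t2 * t3))) := by
      rw [hm1, hm2, hm3, ht1, ht2, ht3]; ring
    rw [hprod] at hE
    set u := (t1 + t2 + t3) * (t1 * (t2 * t3)) with hu
    have hmeq : m ^ 2 = 16 * u := by
      have : 16 * m ^ 2 = 16 * (16 * u) := by linarith
      exact Nat.eq_of_mul_eq_mul_left (by norm_num) this
    obtain ⟨k, hk⟩ : ∃ k, m = 4 * k + 2 := ⟨m / 4, by omega⟩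
    have hm2' : m ^ 2 = 16 * (k * k + k) + 4 := by rw [hk]; ring
    set v := k * k + k with hv
    have : 16 * u = 16 * v + 4 := hmeq.symm.trans hm2'
    omega
  rw [hgcd]
  omega

theorem stmt_3 (a b c : ℕ) (ha : 0 < a) (hb : 0 < b) (hc : 0 < c)
    (h1 : a < b + c) (h2 : b < a + c) (h3 : c < a + b)
    (d : ℕ) (hd : d = Nat.gcd (b + c - a) (Nat.gcd (a + c - b) (a + b - c)))
    (hA : ∃ n : ℤ, heronArea a b c = (n : ℝ) ∧ n % 4 = 2) :
    d % 4 = 2 := by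
  obtain ⟨n, hn, hmod⟩ := hA
  simp only [heronArea] at hn
  have ha' : (a : ℝ) < (b : ℝ) + (c : ℝ) := by exact_mod_cast h1
  have hb' : (b : ℝ) < (a : ℝ) + (c : ℝ) := by exact_mod_cast h2
  have hc' : (c : ℝ) < (a : ℝ) + (b : ℝ) := by exact_mod_cast h3
  have hXnn : 0 ≤ ((a + b + c : ℝ) / 2) * ((a + b + c : ℝ) / 2 - a) *
      ((a + b + c : ℝ) / 2 - b) * ((a + b + c : ℝ) / 2 - c) := by
    have f0 : (0:ℝ) ≤ (a + b + c : ℝ) / 2 := by positivity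
    have f1 : (0:ℝ) ≤ (a + b + c : ℝ) / 2 - a := by linarith
    have f2 : (0:ℝ) ≤ (a + b + c : ℝ) / 2 - b := by linarith
    have f3 : (0:ℝ) ≤ (a + b + c : ℝ) / 2 - c := by linarith
    exact mul_nonneg (mul_nonneg (mul_nonneg f0 f1) f2) f3
  have hsq : (n : ℝ) ^ 2 = ((a + b + c : ℝ) / 2) * ((a + b + c : ℝ) / 2 - a) *
      ((a + b + c : ℝ) / 2 - b) * ((a + b + c : ℝ) / 2 - c) := by
    have := Real.sq_sqrt hXnn
    rw [hn] at this
    exact this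
  have hn0 : 0 ≤ n := by
    have : (0:ℝ) ≤ (n : ℝ) := hn ▸ Real.sqrt_nonneg _
    exact_mod_cast this
  have hE : (16 : ℤ) * n ^ 2 =
      ((b + c - a : ℕ) : ℤ) * ((a + c - b : ℕ) : ℤ) * ((a + b - c : ℕ) : ℤ)
        * ((a + b + c : ℕ) : ℤ) := by
    have h16 : (16 : ℝ) * (n : ℝ) ^ 2 =
        ((b + c - a : ℕ) : ℝ) * ((a + c - b : ℕ) : ℝ) * ((a + b - c : ℕ) : ℝ)
          * ((a + b + c : ℕ) : ℝ) := by
      rw [hsq, Nat.cast_sub (by omega : a ≤ b + c), Nat.cast_sub (by omega : b ≤ a + c),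
        Nat.cast_sub (by omega : c ≤ a + b)]
      push_cast
      ring
    exact_mod_cast h16
  lift n to ℕ using hn0 with m
  have hEm : 16 * m ^ 2 = (b + c - a) * (a + c - b) * (a + b - c) * (a + b + c) := by
    exact_mod_cast hE
  have hm4 : m % 4 = 2 := by omega
  have hsum : (b + c - a) + (a + c - b) + (a + b - c) = a + b + c := by omega
  have hE' : 16 * m ^ 2 = ((b + c - a) + (a + c - b) + (a + b - c)) * (b + c - a)
      * (a + c - b) * (a + b - c) := by
    rw [hsum, hEm]; ring
  have p12 : (b + c - a) % 2 = (a + c - b) % 2 := by omega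
  have p13 : (b + c - a) % 2 = (a + b - c) % 2 := by omega
  rw [hd]
  exact key_gcd _ _ _ m hE' hm4 p12 p13
end

section
/- Let a, b, c be positive integers satisfying the strict triangle inequalities, let N₁ = −a+b+c, N₂ = a−b+c, N₃ = a+b−c, N = a+b+c, d = gcd(N₁, N₂, N₃), and assume condition (6): gcd((N₁/d)·(N₂/d)·(N₃/d), N/d) = 1. If either (i) a, b, c are all odd, or (ii) exactly two of a, b, c are even and one is odd, or (iii) N₁, N₂, N₃ are all divisible by exactly the same highest power of 2 (their 2-adic valuations are equal), then the area A of the triangle with sides a, b, c is not a rational number. -/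
theorem Nat.isSquare_of_isSquare_sq_mul {k x : ℕ} (hk : k ≠ 0) (h : IsSquare (k ^ 2 * x)) :
    IsSquare x := by
  rw [← Rat.isSquare_natCast_iff] at h ⊢
  obtain ⟨r, hr⟩ := h
  refine ⟨r / k, ?_⟩
  push_cast at hr
  field_simp
  linear_combination hr

theorem Nat.Coprime.isSquare_left_of_isSquare_mul {m n : ℕ} (hmn : m.Coprime n)
    (h : IsSquare (m * n)) : IsSquare m := by
  obtain ⟨r, hr⟩ := h
  obtain ⟨t, ht⟩ := exists_eq_pow_of_mul_eq_pow (Nat.isUnit_iff.mpr hmn) (hr.trans (sq r).symm)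
  exact ⟨t, ht.trans (sq t)⟩

theorem Nat.Coprime.isSquare_right_of_isSquare_mul {m n : ℕ} (hmn : m.Coprime n)
    (h : IsSquare (m * n)) : IsSquare n :=
  hmn.symm.isSquare_left_of_isSquare_mul (mul_comm m n ▸ h)

theorem Nat.not_dvd_right_of_pow_padicValNat_mul_dvd {p d m : ℕ} [Fact (Nat.Prime p)]
    (h : d * m ≠ 0) (hpd : p ^ padicValNat p (d * m) ∣ d) : ¬ p ∣ m := by
  rintro ⟨k, rfl⟩
  apply pow_succ_padicValNat_not_dvd (p := p) h
  rw [pow_succ]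
  exact mul_dvd_mul hpd (dvd_mul_right p k)

theorem ZMod.natCast_eq_one_or_three_of_odd {m : ℕ} (hm : Odd m) :
    (m : ZMod 4) = 1 ∨ (m : ZMod 4) = 3 := by
  have : m % 4 = 1 ∨ m % 4 = 3 := by
    obtain ⟨k, rfl⟩ := hm
    omega
  rw [← ZMod.natCast_mod]
  rcases this with h | h <;> simp [h]

theorem not_isSquare_add_of_odd_of_isSquare_mul {m₁ m₂ m₃ : ℕ} (h₁ : Odd m₁) (h₂ : Odd m₂)
    (h₃ : Odd m₃) (hmul : IsSquare (m₁ * m₂ * m₃)) : ¬ IsSquare (m₁ + m₂ + m₃) := by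
  have key : ∀ x y z : ZMod 4, (x = 1 ∨ x = 3) → (y = 1 ∨ y = 3) → (z = 1 ∨ z = 3) →
      IsSquare (x * y * z) → ¬ IsSquare (x + y + z) := by decide
  intro hadd
  refine key _ _ _ (ZMod.natCast_eq_one_or_three_of_odd h₁) (ZMod.natCast_eq_one_or_three_of_odd h₂)
    (ZMod.natCast_eq_one_or_three_of_odd h₃) ?_ ?_
  · exact_mod_cast hmul.map (Nat.castRingHom (ZMod 4))
  · exact_mod_cast hadd.map (Nat.castRingHom (ZMod 4))

theorem not_isSquare_mul_add_of_odd_of_coprime {m₁ m₂ m₃ : ℕ} (h₁ : Odd m₁) (h₂ : Odd m₂)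
    (h₃ : Odd m₃) (hcop : (m₁ * m₂ * m₃).Coprime (m₁ + m₂ + m₃)) :
    ¬ IsSquare (m₁ * m₂ * m₃ * (m₁ + m₂ + m₃)) := fun h ↦
  not_isSquare_add_of_odd_of_isSquare_mul h₁ h₂ h₃ (hcop.isSquare_left_of_isSquare_mul h)
    (hcop.isSquare_right_of_isSquare_mul h)

theorem not_isSquare_mul_add_of_padicValNat_two_eq {n₁ n₂ n₃ d : ℕ} (h₁ : n₁ ≠ 0)
    (h₂ : n₂ ≠ 0) (h₃ : n₃ ≠ 0) (hv₁₂ : padicValNat 2 n₁ = padicValNat 2 n₂)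
    (hv₂₃ : padicValNat 2 n₂ = padicValNat 2 n₃) (hd : d = n₁.gcd (n₂.gcd n₃))
    (hcop : Nat.gcd (n₁ / d * (n₂ / d) * (n₃ / d)) ((n₁ + n₂ + n₃) / d) = 1) :
    ¬ IsSquare (n₁ * n₂ * n₃ * (n₁ + n₂ + n₃)) := by
  have hd₀ : d ≠ 0 := hd ▸ Nat.gcd_ne_zero_left h₁
  have hpow : 2 ^ padicValNat 2 n₁ ∣ d :=
    hd ▸ Nat.dvd_gcd pow_padicValNat_dvd <| Nat.dvd_gcd (hv₁₂ ▸ pow_padicValNat_dvd)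
      (hv₁₂ ▸ hv₂₃ ▸ pow_padicValNat_dvd)
  obtain ⟨m₁, rfl⟩ : d ∣ n₁ := hd ▸ Nat.gcd_dvd_left _ _
  obtain ⟨m₂, rfl⟩ : d ∣ n₂ := hd ▸ (Nat.gcd_dvd_right _ _).trans (Nat.gcd_dvd_left _ _)
  obtain ⟨m₃, rfl⟩ : d ∣ n₃ := hd ▸ (Nat.gcd_dvd_right _ _).trans (Nat.gcd_dvd_right _ _)
  have hodd {m : ℕ} (hm : d * m ≠ 0) (hpd : 2 ^ padicValNat 2 (d * m) ∣ d) : Odd m :=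
    Nat.odd_iff.mpr <| Nat.two_dvd_ne_zero.mp <|
      Nat.not_dvd_right_of_pow_padicValNat_mul_dvd hm hpd
  simp only [← Nat.mul_add, Nat.mul_div_cancel_left _ (Nat.pos_of_ne_zero hd₀)] at hcop
  intro hsq
  refine not_isSquare_mul_add_of_odd_of_coprime (hodd h₁ hpow) (hodd h₂ (hv₁₂ ▸ hpow))
    (hodd h₃ (hv₂₃ ▸ hv₁₂ ▸ hpow)) hcop (Nat.isSquare_of_isSquare_sq_mul (pow_ne_zero 2 hd₀) ?_)
  convert hsq using 1
  ring

theorem heronArea_eq_sqrt {a b c : ℕ} (h₁ : a < b + c) (h₂ : b < a + c) (h₃ : c < a + b) :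
    heronArea a b c =
      √(((b + c - a) * (a + c - b) * (a + b - c) * (a + b + c) : ℕ) / 16 : ℝ) := by
  unfold heronArea
  congr 1
  push_cast [Nat.cast_sub h₁.le, Nat.cast_sub h₂.le, Nat.cast_sub h₃.le]
  ring

theorem isSquare_of_heronArea_eq_ratCast {a b c : ℕ} (h₁ : a < b + c) (h₂ : b < a + c)
    (h₃ : c < a + b) {q : ℚ} (hq : heronArea a b c = q) :
    IsSquare ((b + c - a) * (a + c - b) * (a + b - c) * (a + b + c)) := by
  have hq₀ : 0 ≤ (q : ℝ) := hq ▸ Real.sqrt_nonneg _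
  rw [heronArea_eq_sqrt h₁ h₂ h₃, Real.sqrt_eq_iff_eq_sq (by positivity) hq₀] at hq
  rw [← Rat.isSquare_natCast_iff]
  generalize (b + c - a) * (a + c - b) * (a + b - c) * (a + b + c) = P at hq ⊢
  refine ⟨4 * q, ?_⟩
  have : (P : ℝ) = ((4 * q * (4 * q) : ℚ) : ℝ) := by
    push_cast
    linear_combination 16 * hq
  exact_mod_cast this

theorem padicValNat_two_eq_zero_of_odd_perimeter {a b c : ℕ} (h₁ : a < b + c) (h₂ : b < a + c)
    (h₃ : c < a + b) (hodd : Odd (a + b + c)) :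
    padicValNat 2 (b + c - a) = 0 ∧ padicValNat 2 (a + c - b) = 0 ∧
      padicValNat 2 (a + b - c) = 0 := by
  rw [Nat.odd_iff] at hodd
  refine ⟨?_, ?_, ?_⟩ <;> exact padicValNat.eq_zero_of_not_dvd (by omega)

theorem stmt_4_general (a b c : ℕ)
    (h1 : a < b + c) (h2 : b < a + c) (h3 : c < a + b)
    (d : ℕ) (hd : d = Nat.gcd (b + c - a) (Nat.gcd (a + c - b) (a + b - c)))
    (h6 : Nat.gcd (((b + c - a) / d) * ((a + c - b) / d) * ((a + b - c) / d))
      ((a + b + c) / d) = 1)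
    (hcase :
      (Odd a ∧ Odd b ∧ Odd c) ∨
      ((Even a ∧ Even b ∧ Odd c) ∨ (Even a ∧ Odd b ∧ Even c) ∨
        (Odd a ∧ Even b ∧ Even c)) ∨
      (padicValNat 2 (b + c - a) = padicValNat 2 (a + c - b) ∧
        padicValNat 2 (a + c - b) = padicValNat 2 (a + b - c))) :
    ¬ ∃ q : ℚ, heronArea a b c = (q : ℝ) := by
  rintro ⟨q, hq⟩
  have hv : padicValNat 2 (b + c - a) = padicValNat 2 (a + c - b) ∧
      padicValNat 2 (a + c - b) = padicValNat 2 (a + b - c) := by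
    by_cases hodd : Odd (a + b + c)
    · obtain ⟨h₁, h₂, h₃⟩ := padicValNat_two_eq_zero_of_odd_perimeter h1 h2 h3 hodd
      exact ⟨h₁.trans h₂.symm, h₂.trans h₃.symm⟩
    · simp only [Nat.odd_iff, Nat.even_iff] at hodd hcase
      omega
  have hperim : a + b + c = (b + c - a) + (a + c - b) + (a + b - c) := by omega
  have hsq := isSquare_of_heronArea_eq_ratCast h1 h2 h3 hq
  rw [hperim] at hsq h6
  exact not_isSquare_mul_add_of_padicValNat_two_eq (by omega) (by omega) (by omega) hv.1 hv.2 hd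
    h6 hsq

theorem stmt_4 (a b c : ℕ) (ha : 0 < a) (hb : 0 < b) (hc : 0 < c)
    (h1 : a < b + c) (h2 : b < a + c) (h3 : c < a + b)
    (d : ℕ) (hd : d = Nat.gcd (b + c - a) (Nat.gcd (a + c - b) (a + b - c)))
    (h6 : Nat.gcd (((b + c - a) / d) * ((a + c - b) / d) * ((a + b - c) / d))
      ((a + b + c) / d) = 1)
    (hcase :
      (Odd a ∧ Odd b ∧ Odd c) ∨
      ((Even a ∧ Even b ∧ Odd c) ∨ (Even a ∧ Odd b ∧ Even c) ∨
        (Odd a ∧ Even b ∧ Even c)) ∨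
      (padicValNat 2 (b + c - a) = padicValNat 2 (a + c - b) ∧
        padicValNat 2 (a + c - b) = padicValNat 2 (a + b - c))) :
    ¬ ∃ q : ℚ, heronArea a b c = (q : ℝ) :=
  stmt_4_general a b c h1 h2 h3 d hd h6 hcase
end

section
/- Let a, b, c be positive integers satisfying the strict triangle inequalities, let N₁ = −a+b+c, N₂ = a−b+c, N₃ = a+b−c, N = a+b+c, d = gcd(N₁, N₂, N₃), and assume condition (6): gcd((N₁/d)·(N₂/d)·(N₃/d), N/d) = 1. If gcd(N₁/d, N₂/d) = gcd(N₁/d, N₃/d) = gcd(N₂/d, N₃/d) = 1, then the area A of the triangle with sides a, b, c is not a rational number. -/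
private lemma nat_sq_of_coprime {a b c : ℕ} (h : Nat.Coprime a b) (heq : a * b = c ^ 2) :
    ∃ a0 : ℕ, a = a0 ^ 2 := by
  have hz : (a : ℤ) * b = (c : ℤ) ^ 2 := by exact_mod_cast heq
  obtain ⟨a0, ha0 | ha0⟩ := Int.sq_of_isCoprime (Nat.isCoprime_iff_coprime.mpr h) hz
  · refine ⟨a0.natAbs, ?_⟩
    have : (a : ℤ) = ((a0.natAbs : ℤ)) ^ 2 := by rw [Int.natCast_natAbs, sq_abs]; exact ha0
    exact_mod_cast this
  · have h1 : (a : ℤ) ≤ 0 := by rw [ha0]; exact neg_nonpos.mpr (sq_nonneg _)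
    have h2 : (a : ℤ) = 0 := le_antisymm h1 (Int.natCast_nonneg a)
    exact ⟨0, by exact_mod_cast h2⟩

private lemma odd_sq_mod4 {n t : ℕ} (h : n = 2 * t + 1) : n ^ 2 % 4 = 1 := by
  have h4 : n ^ 2 = 4 * (t * t + t) + 1 := by subst h; ring
  rw [h4, Nat.mul_add_mod]

private lemma sq_mod4 (n : ℕ) : n ^ 2 % 4 = 0 ∨ n ^ 2 % 4 = 1 := by
  rcases Nat.even_or_odd n with ⟨t, rfl⟩ | ⟨t, rfl⟩
  · left
    have h4 : (t + t) ^ 2 = 4 * (t * t) := by ring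
    rw [h4, Nat.mul_mod_right]
  · right; exact odd_sq_mod4 rfl

theorem stmt_6 (a b c : ℕ) (ha : 0 < a) (hb : 0 < b) (hc : 0 < c)
    (h1 : a < b + c) (h2 : b < a + c) (h3 : c < a + b)
    (d : ℕ) (hd : d = Nat.gcd (b + c - a) (Nat.gcd (a + c - b) (a + b - c)))
    (h6 : Nat.gcd (((b + c - a) / d) * ((a + c - b) / d) * ((a + b - c) / d))
      ((a + b + c) / d) = 1)
    (h12 : Nat.gcd ((b + c - a) / d) ((a + c - b) / d) = 1)
    (h13 : Nat.gcd ((b + c - a) / d) ((a + b - c) / d) = 1)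
    (h23 : Nat.gcd ((a + c - b) / d) ((a + b - c) / d) = 1) :
    ¬ ∃ q : ℚ, heronArea a b c = (q : ℝ) := by
  rintro ⟨q, hq⟩
  -- basic setup
  have hN1 : 0 < b + c - a := by omega
  have hd0 : 0 < d := by
    rw [hd]; exact Nat.gcd_pos_of_pos_left _ hN1
  have hdvd1 : d ∣ (b + c - a) := hd ▸ Nat.gcd_dvd_left _ _
  have hdvd2 : d ∣ (a + c - b) := hd ▸ (Nat.gcd_dvd_right _ _).trans (Nat.gcd_dvd_left _ _)
  have hdvd3 : d ∣ (a + b - c) := hd ▸ (Nat.gcd_dvd_right _ _).trans (Nat.gcd_dvd_right _ _)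
  set n1 := (b + c - a) / d with hn1
  set n2 := (a + c - b) / d with hn2
  set n3 := (a + b - c) / d with hn3
  have e1 : d * n1 = b + c - a := Nat.mul_div_cancel' hdvd1
  have e2 : d * n2 = a + c - b := Nat.mul_div_cancel' hdvd2
  have e3 : d * n3 = a + b - c := Nat.mul_div_cancel' hdvd3
  clear_value n1 n2 n3
  clear hn1 hn2 hn3
  have hNsum : a + b + c = d * (n1 + n2 + n3) := by
    rw [Nat.mul_add, Nat.mul_add, e1, e2, e3]; omega
  have hn : (a + b + c) / d = n1 + n2 + n3 := by
    rw [hNsum, Nat.mul_div_cancel_left _ hd0]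
  rw [hn] at h6
  -- positivity of the n_i
  have hn1pos : 0 < n1 :=
    Nat.pos_of_ne_zero fun h => by rw [h, Nat.mul_zero] at e1; omega
  have hn2pos : 0 < n2 :=
    Nat.pos_of_ne_zero fun h => by rw [h, Nat.mul_zero] at e2; omega
  have hn3pos : 0 < n3 :=
    Nat.pos_of_ne_zero fun h => by rw [h, Nat.mul_zero] at e3; omega
  -- Heron's area as sqrt of a natural number
  set M : ℕ := (a + b + c) * (b + c - a) * (a + c - b) * (a + b - c) with hM
  have hMcast : ((a + b + c : ℝ) / 2) * ((a + b + c : ℝ) / 2 - a) *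
      ((a + b + c : ℝ) / 2 - b) * ((a + b + c : ℝ) / 2 - c) = (M : ℝ) / 16 := by
    have l1 : a ≤ b + c := h1.le
    have l2 : b ≤ a + c := h2.le
    have l3 : c ≤ a + b := h3.le
    rw [hM]
    push_cast [l1, l2, l3]
    ring
  have hA : heronArea a b c = Real.sqrt M / 4 := by
    unfold heronArea
    rw [hMcast]
    rw [show ((M : ℝ) / 16) = (Real.sqrt M / 4) ^ 2 by
      rw [div_pow, Real.sq_sqrt (by positivity : (0:ℝ) ≤ (M:ℝ))]; norm_num]
    exact Real.sqrt_sq (by positivity)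
  -- the area rational forces M to be a perfect square
  have hnotirr : ¬ Irrational (Real.sqrt M) := by
    rw [hA] at hq
    intro hirr
    exact hirr ⟨4 * q, by push_cast; linarith⟩
  have hsqM : IsSquare M := by
    by_contra h
    exact hnotirr (irrational_sqrt_natCast_iff.mpr h)
  -- peel off d^4
  obtain ⟨x, hx⟩ := hsqM
  have hMfact : M = d ^ 4 * ((n1 + n2 + n3) * (n1 * n2 * n3)) := by
    rw [hM, ← e1, ← e2, ← e3, hNsum]; ring
  have hd2x : d ^ 2 ∣ x := by
    have hdd : (d ^ 2) ^ 2 ∣ x ^ 2 :=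
      ⟨(n1 + n2 + n3) * (n1 * n2 * n3), by rw [pow_two, ← hx, hMfact]; ring⟩
    exact (Nat.pow_dvd_pow_iff (by norm_num)).mp hdd
  obtain ⟨y, hy⟩ := hd2x
  have hm : (n1 + n2 + n3) * (n1 * n2 * n3) = y ^ 2 := by
    have h4 : (0:ℕ) < d ^ 4 := by positivity
    have : d ^ 4 * ((n1 + n2 + n3) * (n1 * n2 * n3)) = d ^ 4 * y ^ 2 := by
      rw [← hMfact, hx, hy]; ring
    exact Nat.eq_of_mul_eq_mul_left h4 this
  -- split into coprime squares
  have hcop : Nat.Coprime (n1 + n2 + n3) (n1 * n2 * n3) := Nat.Coprime.symm h6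
  obtain ⟨s, hs⟩ := nat_sq_of_coprime hcop hm
  obtain ⟨t, ht⟩ := nat_sq_of_coprime hcop.symm (by rw [mul_comm]; exact hm)
  have hcop1 : Nat.Coprime n1 (n2 * n3) := Nat.Coprime.mul_right h12 h13
  obtain ⟨s1, hs1⟩ := nat_sq_of_coprime hcop1 (by rw [← mul_assoc]; exact ht)
  obtain ⟨u, hu⟩ := nat_sq_of_coprime hcop1.symm (by rw [mul_comm, ← mul_assoc]; exact ht)
  obtain ⟨s2, hs2⟩ := nat_sq_of_coprime h23 hu
  obtain ⟨s3, hs3⟩ := nat_sq_of_coprime (Nat.Coprime.symm h23) (by rw [mul_comm]; exact hu)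
  -- all n_i are odd
  have hodd : n1 % 2 = 1 ∧ n2 % 2 = 1 ∧ n3 % 2 = 1 := by
    have g12 : ¬ (2 ∣ n1 ∧ 2 ∣ n2) := by
      rintro ⟨u1, u2⟩; have := Nat.dvd_gcd u1 u2; rw [h12] at this; omega
    have g13 : ¬ (2 ∣ n1 ∧ 2 ∣ n3) := by
      rintro ⟨u1, u2⟩; have := Nat.dvd_gcd u1 u2; rw [h13] at this; omega
    have g23 : ¬ (2 ∣ n2 ∧ 2 ∣ n3) := by
      rintro ⟨u1, u2⟩; have := Nat.dvd_gcd u1 u2; rw [h23] at this; omega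
    have g6 : ¬ (2 ∣ n1 * n2 * n3 ∧ 2 ∣ (n1 + n2 + n3)) := by
      rintro ⟨u1, u2⟩; have := Nat.dvd_gcd u1 u2; rw [h6] at this; omega
    rcases Nat.even_or_odd n1 with hp1 | hp1 <;>
      rcases Nat.even_or_odd n2 with hp2 | hp2 <;>
        rcases Nat.even_or_odd n3 with hp3 | hp3
    all_goals first
      | (exact ⟨Nat.odd_iff.mp hp1, Nat.odd_iff.mp hp2, Nat.odd_iff.mp hp3⟩)
      | (exfalso; apply g12; exact ⟨hp1.two_dvd, hp2.two_dvd⟩)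
      | (exfalso; apply g13; exact ⟨hp1.two_dvd, hp3.two_dvd⟩)
      | (exfalso; apply g23; exact ⟨hp2.two_dvd, hp3.two_dvd⟩)
      | (exfalso; apply g6; constructor
         · exact Dvd.dvd.mul_right (Dvd.dvd.mul_right hp1.two_dvd n2) n3
         · have o2 := Nat.odd_iff.mp hp2; have o3 := Nat.odd_iff.mp hp3
           have e1 := hp1.two_dvd; omega)
      | (exfalso; apply g6; constructor
         · exact Dvd.dvd.mul_right (Dvd.dvd.mul_left hp2.two_dvd n1) n3
         · have o1 := Nat.odd_iff.mp hp1; have o3 := Nat.odd_iff.mp hp3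
           have e2 := hp2.two_dvd; omega)
      | (exfalso; apply g6; constructor
         · exact Dvd.dvd.mul_left hp3.two_dvd (n1 * n2)
         · have o1 := Nat.odd_iff.mp hp1; have o2 := Nat.odd_iff.mp hp2
           have e3 := hp3.two_dvd; omega)
  obtain ⟨o1, o2, o3⟩ := hodd
  -- squares of odds are 1 mod 4, sum is 3 mod 4, but n is a square: contradiction
  have q1 : n1 % 4 = 1 := by
    have hs1odd : s1 % 2 = 1 := by
      rcases Nat.even_or_odd s1 with ⟨t0, rfl⟩ | hp
      · exfalso
        have : n1 = 4 * (t0 * t0) := by rw [hs1]; ring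
        omega
      · exact Nat.odd_iff.mp hp
    have := odd_sq_mod4 (n := s1) (t := s1 / 2) (by omega)
    omega
  have q2 : n2 % 4 = 1 := by
    have hs2odd : s2 % 2 = 1 := by
      rcases Nat.even_or_odd s2 with ⟨t0, rfl⟩ | hp
      · exfalso
        have : n2 = 4 * (t0 * t0) := by rw [hs2]; ring
        omega
      · exact Nat.odd_iff.mp hp
    have := odd_sq_mod4 (n := s2) (t := s2 / 2) (by omega)
    omega
  have q3 : n3 % 4 = 1 := by
    have hs3odd : s3 % 2 = 1 := by
      rcases Nat.even_or_odd s3 with ⟨t0, rfl⟩ | hp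
      · exfalso
        have : n3 = 4 * (t0 * t0) := by rw [hs3]; ring
        omega
      · exact Nat.odd_iff.mp hp
    have := odd_sq_mod4 (n := s3) (t := s3 / 2) (by omega)
    omega
  have hsum : (n1 + n2 + n3) % 4 = 3 := by omega
  have := sq_mod4 s
  omega
end

section
/- Let a, b, c be positive integers satisfying the strict triangle inequalities, let N₁ = −a+b+c, N₂ = a−b+c, N₃ = a+b−c, N = a+b+c, d = gcd(N₁, N₂, N₃), and assume condition (6): gcd((N₁/d)·(N₂/d)·(N₃/d), N/d) = 1. If the area A of the triangle with sides a, b, c is a rational number, then A is an even positive integer. -/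
private lemma odd4 (x y z s : ℕ) (hx : x % 2 = 1) (hy : y % 2 = 1) (hz : z % 2 = 1)
    (h : (x + y + z) * x * y * z = s ^ 2) : False := by
  have cast4 : ∀ w : ℕ, ((w : ZMod 4)) = ((w % 4 : ℕ) : ZMod 4) :=
    fun w => (ZMod.natCast_mod w 4).symm
  have hmain : ((x : ZMod 4) + y + z) * x * y * z = (s : ZMod 4) ^ 2 := by
    exact_mod_cast congrArg (Nat.cast : ℕ → ZMod 4) h
  have hsq : ∀ u : ZMod 4, u ^ 2 = 0 ∨ u ^ 2 = 1 := by decide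
  rcases (by omega : x % 4 = 1 ∨ x % 4 = 3) with h1 | h1 <;>
  rcases (by omega : y % 4 = 1 ∨ y % 4 = 3) with h2 | h2 <;>
  rcases (by omega : z % 4 = 1 ∨ z % 4 = 3) with h3 | h3 <;>
  · rw [cast4 x, cast4 y, cast4 z, h1, h2, h3] at hmain
    rcases hsq s with h4 | h4 <;> rw [h4] at hmain <;> revert hmain <;> decide

private lemma sq_of_coprime_mul {x y s : ℕ} (h : Nat.Coprime x y) (hs : x * y = s ^ 2) :
    ∃ u, x = u ^ 2 := by
  apply exists_eq_pow_of_mul_eq_pow (c := s) (k := 2) ?_ hs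
  rw [Nat.isUnit_iff]
  exact h

private lemma core (N1 N2 N3 t d : ℕ) (h1 : 0 < N1) (h2 : 0 < N2) (h3 : 0 < N3)
    (hp12 : (N1 + N2) % 2 = 0) (hp13 : (N1 + N3) % 2 = 0)
    (hd : d = Nat.gcd N1 (Nat.gcd N2 N3))
    (h6 : Nat.gcd ((N1 / d) * (N2 / d) * (N3 / d)) ((N1 + N2 + N3) / d) = 1)
    (ht : t ^ 2 = (N1 + N2 + N3) * N1 * N2 * N3) : 8 ∣ t ∧ 0 < t := by
  have htpos : 0 < t := by
    rcases Nat.eq_zero_or_pos t with h0 | h0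
    · exfalso
      rw [h0] at ht
      have hpos : 0 < (N1 + N2 + N3) * N1 * N2 * N3 := by positivity
      simp at ht
      omega
    · exact h0
  refine ⟨?_, htpos⟩
  have hd1 : d ∣ N1 := hd ▸ Nat.gcd_dvd_left _ _
  have hd2 : d ∣ N2 := hd ▸ (Nat.gcd_dvd_right N1 (Nat.gcd N2 N3)).trans (Nat.gcd_dvd_left N2 N3)
  have hd3 : d ∣ N3 := hd ▸ (Nat.gcd_dvd_right N1 (Nat.gcd N2 N3)).trans (Nat.gcd_dvd_right N2 N3)
  have hdpos : 0 < d := by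
    rcases Nat.eq_zero_or_pos d with h0 | h0
    · exfalso; rw [h0] at hd1; have := Nat.eq_zero_of_zero_dvd hd1; omega
    · exact h0
  obtain ⟨n1, hn1⟩ := hd1
  obtain ⟨n2, hn2⟩ := hd2
  obtain ⟨n3, hn3⟩ := hd3
  have hq1 : N1 / d = n1 := by rw [hn1, Nat.mul_div_cancel_left _ hdpos]
  have hq2 : N2 / d = n2 := by rw [hn2, Nat.mul_div_cancel_left _ hdpos]
  have hq3 : N3 / d = n3 := by rw [hn3, Nat.mul_div_cancel_left _ hdpos]
  have hqs : (N1 + N2 + N3) / d = n1 + n2 + n3 := by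
    rw [hn1, hn2, hn3, ← Nat.mul_add, ← Nat.mul_add, Nat.mul_div_cancel_left _ hdpos]
  rw [hq1, hq2, hq3, hqs] at h6
  have hn1pos : 0 < n1 := by
    rcases Nat.eq_zero_or_pos n1 with h0 | h0
    · rw [h0, Nat.mul_zero] at hn1; omega
    · exact h0
  have hn2pos : 0 < n2 := by
    rcases Nat.eq_zero_or_pos n2 with h0 | h0
    · rw [h0, Nat.mul_zero] at hn2; omega
    · exact h0
  have hn3pos : 0 < n3 := by
    rcases Nat.eq_zero_or_pos n3 with h0 | h0
    · rw [h0, Nat.mul_zero] at hn3; omega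
    · exact h0
  have ht4 : t ^ 2 = (d ^ 2) ^ 2 * ((n1 + n2 + n3) * (n1 * n2 * n3)) := by
    rw [ht, hn1, hn2, hn3]; ring
  have hdvdt : d ^ 2 ∣ t := (Nat.pow_dvd_pow_iff two_ne_zero).mp ⟨_, ht4⟩
  obtain ⟨s, hs⟩ := hdvdt
  have hsP : s ^ 2 = (n1 + n2 + n3) * (n1 * n2 * n3) := by
    rw [hs, mul_pow] at ht4
    exact Nat.eq_of_mul_eq_mul_left (by positivity) ht4
  have hco : Nat.Coprime (n1 + n2 + n3) (n1 * n2 * n3) := Nat.Coprime.symm h6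
  obtain ⟨s1, hs1⟩ := sq_of_coprime_mul hco hsP.symm
  obtain ⟨s2, hs2⟩ := sq_of_coprime_mul hco.symm (by rw [mul_comm]; exact hsP.symm)
  -- all Nᵢ even
  have hN1e : N1 % 2 = 0 := by
    by_contra hodd
    exact odd4 N1 N2 N3 t (by omega) (by omega) (by omega) ht.symm
  have h2d : 2 ∣ d :=
    hd ▸ Nat.dvd_gcd (by omega) (Nat.dvd_gcd (by omega) (by omega))
  -- sum of nᵢ is odd
  have hnodd : (n1 + n2 + n3) % 2 = 1 := by
    by_contra heven
    rcases Nat.even_or_odd (n1 * n2 * n3) with he | ho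
    · have h21 : (2 : ℕ) ∣ 1 := h6 ▸ Nat.dvd_gcd he.two_dvd (by omega)
      omega
    · rw [Nat.odd_mul, Nat.odd_mul] at ho
      obtain ⟨⟨o1, o2⟩, o3⟩ := ho
      rw [Nat.odd_iff] at o1 o2 o3
      omega
  -- 4 divides the product
  have h4p : 4 ∣ n1 * n2 * n3 := by
    rcases (by omega : n1 % 2 = 0 ∨ n1 % 2 = 1) with e1 | e1 <;>
    rcases (by omega : n2 % 2 = 0 ∨ n2 % 2 = 1) with e2 | e2 <;>
    rcases (by omega : n3 % 2 = 0 ∨ n3 % 2 = 1) with e3 | e3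
    · omega
    · obtain ⟨u, hu⟩ : 2 ∣ n1 := by omega
      obtain ⟨v, hv⟩ : 2 ∣ n2 := by omega
      exact ⟨u * v * n3, by rw [hu, hv]; ring⟩
    · obtain ⟨u, hu⟩ : 2 ∣ n1 := by omega
      obtain ⟨v, hv⟩ : 2 ∣ n3 := by omega
      exact ⟨u * n2 * v, by rw [hu, hv]; ring⟩
    · omega
    · obtain ⟨u, hu⟩ : 2 ∣ n2 := by omega
      obtain ⟨v, hv⟩ : 2 ∣ n3 := by omega
      exact ⟨n1 * u * v, by rw [hu, hv]; ring⟩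
    · omega
    · omega
    · exact absurd (show (n1 + n2 + n3) * n1 * n2 * n3 = s ^ 2 by rw [hsP]; ring)
        (fun h => odd4 n1 n2 n3 s e1 e2 e3 h)
  have h2s2 : 2 ∣ s2 := by
    apply (Nat.pow_dvd_pow_iff two_ne_zero).mp
    rw [← hs2]
    calc (2:ℕ) ^ 2 = 4 := by norm_num
    _ ∣ n1 * n2 * n3 := h4p
  have hseq : s = s1 * s2 := by
    have heq : s ^ 2 = (s1 * s2) ^ 2 := by rw [hsP, hs1, hs2]; ring
    exact Nat.pow_left_injective (by norm_num) heq
  obtain ⟨u, hu⟩ := h2d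
  obtain ⟨v, hv⟩ := h2s2
  exact ⟨u * u * s1 * v, by rw [hs, hseq, hu, hv]; ring⟩


theorem stmt_7 (a b c : ℕ) (ha : 0 < a) (hb : 0 < b) (hc : 0 < c)
    (h1 : a < b + c) (h2 : b < a + c) (h3 : c < a + b)
    (d : ℕ) (hd : d = Nat.gcd (b + c - a) (Nat.gcd (a + c - b) (a + b - c)))
    (h6 : Nat.gcd (((b + c - a) / d) * ((a + c - b) / d) * ((a + b - c) / d))
      ((a + b + c) / d) = 1)
    (hrat : ∃ q : ℚ, heronArea a b c = (q : ℝ)) :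
    ∃ k : ℕ, 0 < k ∧ heronArea a b c = ((2 * k : ℕ) : ℝ) := by
  obtain ⟨q, hq⟩ := hrat
  set N1 := b + c - a with hN1
  set N2 := a + c - b with hN2
  set N3 := a + b - c with hN3
  set m : ℕ := (N1 + N2 + N3) * N1 * N2 * N3 with hm
  have c1 : ((N1 : ℕ) : ℝ) = (b : ℝ) + c - a := by
    rw [hN1, Nat.cast_sub h1.le]; push_cast; ring
  have c2 : ((N2 : ℕ) : ℝ) = (a : ℝ) + c - b := by
    rw [hN2, Nat.cast_sub h2.le]; push_cast; ring
  have c3 : ((N3 : ℕ) : ℝ) = (a : ℝ) + b - c := by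
    rw [hN3, Nat.cast_sub h3.le]; push_cast; ring
  have hsum : N1 + N2 + N3 = a + b + c := by omega
  have cm : ((m : ℕ) : ℝ) =
      ((a : ℝ) + b + c) * ((b : ℝ) + c - a) * ((a : ℝ) + c - b) * ((a : ℝ) + b - c) := by
    rw [hm, hsum]
    simp only [Nat.cast_mul]
    rw [c1, c2, c3]
    push_cast
    ring
  have hheron : heronArea a b c = Real.sqrt ((m : ℝ) / 16) := by
    unfold heronArea
    congr 1
    rw [cm]
    ring
  have hq2 : (q : ℝ) ^ 2 = (m : ℝ) / 16 := by
    rw [← hq, hheron]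
    exact Real.sq_sqrt (by positivity)
  have hx2 : ((4 * q : ℚ) : ℝ) ^ 2 = ((m : ℤ) : ℝ) := by
    push_cast
    nlinarith [hq2]
  have hqnn : (0 : ℝ) ≤ (q : ℝ) := by
    rw [← hq, hheron]; exact Real.sqrt_nonneg _
  have hint : ∃ y : ℤ, ((4 * q : ℚ) : ℝ) = (y : ℝ) := by
    by_contra hv
    have := irrational_nrt_of_notint_nrt 2 (m : ℤ) hx2 (by exact_mod_cast hv) (by norm_num)
    exact this ⟨4 * q, rfl⟩
  obtain ⟨y, hy⟩ := hint
  have hynn : 0 ≤ y := by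
    have : (0 : ℝ) ≤ (y : ℝ) := by rw [← hy]; push_cast; linarith
    exact_mod_cast this
  set t : ℕ := y.toNat with hT
  have hty : (t : ℝ) = ((4 * q : ℚ) : ℝ) := by
    rw [hy]; congr 1; exact_mod_cast Int.toNat_of_nonneg hynn
  have htm : t ^ 2 = m := by
    have : ((t : ℕ) : ℝ) ^ 2 = ((m : ℕ) : ℝ) := by rw [hty, hx2]; push_cast; ring
    exact_mod_cast this
  have hcore : 8 ∣ t ∧ 0 < t := by
    apply core N1 N2 N3 t d (by omega) (by omega) (by omega) (by omega) (by omega) hd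
    · rw [hsum]; exact h6
    · rw [htm]
  obtain ⟨⟨k, hk⟩, htpos⟩ := hcore
  refine ⟨k, by omega, ?_⟩
  have : (t : ℝ) = 4 * q := by rw [hty]; push_cast; ring
  rw [hq]
  push_cast
  rw [hk] at this
  push_cast at this
  linarith
end

section
/- Let a, b, c be positive integers satisfying the strict triangle inequalities, let N₁ = −a+b+c, N₂ = a−b+c, N₃ = a+b−c, N = a+b+c, d = gcd(N₁, N₂, N₃), and assume condition (6): gcd((N₁/d)·(N₂/d)·(N₃/d), N/d) = 1. If the area A of the triangle with sides a, b, c is a rational number, then N/d is a perfect square and the product (N₁/d)·(N₂/d)·(N₃/d) is a perfect square. -/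
theorem stmt_8 (a b c : ℕ) (ha : 0 < a) (hb : 0 < b) (hc : 0 < c)
    (h1 : a < b + c) (h2 : b < a + c) (h3 : c < a + b)
    (d : ℕ) (hd : d = Nat.gcd (b + c - a) (Nat.gcd (a + c - b) (a + b - c)))
    (h6 : Nat.gcd (((b + c - a) / d) * ((a + c - b) / d) * ((a + b - c) / d))
      ((a + b + c) / d) = 1)
    (hrat : ∃ q : ℚ, heronArea a b c = (q : ℝ)) :
    (∃ t : ℕ, (a + b + c) / d = t ^ 2) ∧
      ∃ k : ℕ, ((b + c - a) / d) * ((a + c - b) / d) * ((a + b - c) / d) = k ^ 2 := by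
  have hdpos : 0 < d := by
    rw [hd]; exact Nat.gcd_pos_of_pos_left _ (by omega)
  have hd1 : d ∣ (b + c - a) := hd ▸ Nat.gcd_dvd_left _ _
  have hd2 : d ∣ (a + c - b) :=
    (hd ▸ Nat.gcd_dvd_right _ _).trans (Nat.gcd_dvd_left _ _)
  have hd3 : d ∣ (a + b - c) :=
    (hd ▸ Nat.gcd_dvd_right _ _).trans (Nat.gcd_dvd_right _ _)
  have hdN : d ∣ (a + b + c) := by
    have : a + b + c = (b + c - a) + ((a + c - b) + (a + b - c)) := by omega
    rw [this]; exact Nat.dvd_add hd1 (Nat.dvd_add hd2 hd3)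
  set n := (a + b + c) / d with hn
  set p := ((b + c - a) / d) * ((a + c - b) / d) * ((a + b - c) / d) with hp
  have e0 : d * n = a + b + c := Nat.mul_div_cancel' hdN
  have e1 : d * ((b + c - a) / d) = b + c - a := Nat.mul_div_cancel' hd1
  have e2 : d * ((a + c - b) / d) = a + c - b := Nat.mul_div_cancel' hd2
  have e3 : d * ((a + b - c) / d) = a + b - c := Nat.mul_div_cancel' hd3
  set M : ℕ := (a + b + c) * (b + c - a) * ((a + c - b) * (a + b - c)) with hM
  -- Step 1: heronArea = sqrt M / 4
  have hcast : (((a:ℝ) + b + c) / 2) * (((a:ℝ) + b + c) / 2 - a) *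
      (((a:ℝ) + b + c) / 2 - b) * (((a:ℝ) + b + c) / 2 - c) = (M : ℝ) / 16 := by
    rw [hM]
    push_cast [Nat.cast_sub (by omega : a ≤ b + c), Nat.cast_sub (by omega : b ≤ a + c),
      Nat.cast_sub (by omega : c ≤ a + b)]
    ring
  have harea : heronArea a b c = Real.sqrt M / 4 := by
    rw [heronArea, hcast, show ((M:ℝ)/16) = (M:ℝ) * (1/4)^2 by ring,
      Real.sqrt_mul (by positivity), Real.sqrt_sq (by norm_num)]
    ring
  -- Step 2: M is a perfect square
  have hSqM : IsSquare M := by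
    by_contra hcon
    obtain ⟨q, hq⟩ := hrat
    rw [harea] at hq
    exact (irrational_sqrt_natCast_iff.mpr hcon) ⟨4 * q, by push_cast; linarith⟩
  -- Step 3: M = d^4 * (n * p)
  have hMd : M = d ^ 4 * (n * p) := by
    rw [hM, ← e0, ← e1, ← e2, ← e3]; ring
  -- Step 4: n * p is a perfect square
  obtain ⟨t, ht⟩ := hSqM
  have ht2 : d ^ 4 * (n * p) = t ^ 2 := by rw [← hMd, ht]; ring
  have hdt : d ^ 2 ∣ t := by
    rw [← Nat.pow_dvd_pow_iff (two_ne_zero)]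
    exact ⟨n * p, by rw [← ht2]; ring⟩
  obtain ⟨s, hs⟩ := hdt
  have hnp : n * p = s ^ 2 := by
    have : d ^ 4 * (n * p) = d ^ 4 * s ^ 2 := by rw [ht2, hs]; ring
    exact Nat.eq_of_mul_eq_mul_left (by positivity) this
  -- Step 5: split via coprimality
  have hcop : Nat.Coprime n p := Nat.Coprime.symm h6
  have hun : IsUnit (gcd n p) := by
    rw [Nat.isUnit_iff]
    exact hcop
  have hun2 : IsUnit (gcd p n) := by
    rw [Nat.isUnit_iff]
    exact h6
  constructor
  · exact exists_eq_pow_of_mul_eq_pow hun hnp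
  · exact exists_eq_pow_of_mul_eq_pow hun2 (by rw [← hnp]; ring)
end

section
/- Let x, y, z, t be positive integers with x² + y² + z² = t², and let D be a positive integer such that either x, y, z are all even, or D is even. Then a = D·(y²+z²)/2, b = D·(x²+z²)/2, c = D·(x²+y²)/2 are positive integers satisfying the strict triangle inequalities a < b + c, b < a + c, c < a + b, and the area of the triangle with sides a, b, c equals D²·x·y·z·t/4, a rational number (in fact a positive integer). -/
set_option maxHeartbeats 1000000 in
theorem stmt_9 (x y z t D : ℕ) (hx : 0 < x) (hy : 0 < y) (hz : 0 < z) (ht : 0 < t)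
    (hD : 0 < D) (heq : x ^ 2 + y ^ 2 + z ^ 2 = t ^ 2)
    (hpar : (Even x ∧ Even y ∧ Even z) ∨ Even D) :
    ∃ a b c : ℕ, 0 < a ∧ 0 < b ∧ 0 < c ∧
      2 * a = D * (y ^ 2 + z ^ 2) ∧ 2 * b = D * (x ^ 2 + z ^ 2) ∧
      2 * c = D * (x ^ 2 + y ^ 2) ∧
      a < b + c ∧ b < a + c ∧ c < a + b ∧
      heronArea a b c = (D ^ 2 * x * y * z * t : ℝ) / 4 ∧
      ∃ n : ℕ, 0 < n ∧ ((D ^ 2 * x * y * z * t : ℝ) / 4) = (n : ℝ) := by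
  -- divisibility facts
  have hdvd : 2 ∣ D * (y ^ 2 + z ^ 2) ∧ 2 ∣ D * (x ^ 2 + z ^ 2) ∧ 2 ∣ D * (x ^ 2 + y ^ 2)
      ∧ 4 ∣ D ^ 2 * x * y * z * t := by
    rcases hpar with ⟨⟨x', hx'⟩, ⟨y', hy'⟩, ⟨z', hz'⟩⟩ | ⟨d, hd⟩
    · subst hx' hy' hz'
      refine ⟨⟨D * (2*y'^2 + 2*z'^2), by ring⟩, ⟨D * (2*x'^2 + 2*z'^2), by ring⟩,
        ⟨D * (2*x'^2 + 2*y'^2), by ring⟩, ⟨D^2 * 2 * x' * y' * z' * t, by ring⟩⟩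
    · subst hd
      refine ⟨⟨d * (y^2+z^2), by ring⟩,
        ⟨d * (x^2+z^2), by ring⟩,
        ⟨d * (x^2+y^2), by ring⟩,
        ⟨d^2 * x * y * z * t, by ring⟩⟩
  obtain ⟨⟨a, ha⟩, ⟨b, hb⟩, ⟨c, hc⟩, ⟨m, hm⟩⟩ := hdvd
  have px : 0 < D * x ^ 2 := Nat.mul_pos hD (pow_pos hx 2)
  have py : 0 < D * y ^ 2 := Nat.mul_pos hD (pow_pos hy 2)
  have pz : 0 < D * z ^ 2 := Nat.mul_pos hD (pow_pos hz 2)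
  have ea : D * (y ^ 2 + z ^ 2) = D * y ^ 2 + D * z ^ 2 := by ring
  have eb : D * (x ^ 2 + z ^ 2) = D * x ^ 2 + D * z ^ 2 := by ring
  have ec : D * (x ^ 2 + y ^ 2) = D * x ^ 2 + D * y ^ 2 := by ring
  refine ⟨a, b, c, ?_, ?_, ?_, ha.symm, hb.symm, hc.symm, ?_, ?_, ?_, ?_, m, ?_, ?_⟩
  · linarith
  · linarith
  · linarith
  · linarith
  · linarith
  · linarith
  · -- Heron
    have eA : (2 * a : ℝ) = D * (y ^ 2 + z ^ 2) := by exact_mod_cast ha.symm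
    have eB : (2 * b : ℝ) = D * (x ^ 2 + z ^ 2) := by exact_mod_cast hb.symm
    have eC : (2 * c : ℝ) = D * (x ^ 2 + y ^ 2) := by exact_mod_cast hc.symm
    have et : (x : ℝ) ^ 2 + y ^ 2 + z ^ 2 = t ^ 2 := by exact_mod_cast heq
    have hA : (a : ℝ) = D * (y ^ 2 + z ^ 2) / 2 := by linarith
    have hB : (b : ℝ) = D * (x ^ 2 + z ^ 2) / 2 := by linarith
    have hC : (c : ℝ) = D * (x ^ 2 + y ^ 2) / 2 := by linarith
    unfold heronArea
    rw [hA, hB, hC, show (D * ((y:ℝ) ^ 2 + z ^ 2) / 2 + D * (x ^ 2 + z ^ 2) / 2 +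
          D * (x ^ 2 + y ^ 2) / 2) / 2 *
        ((D * ((y:ℝ) ^ 2 + z ^ 2) / 2 + D * (x ^ 2 + z ^ 2) / 2 + D * (x ^ 2 + y ^ 2) / 2) / 2 -
          D * (y ^ 2 + z ^ 2) / 2) *
        ((D * ((y:ℝ) ^ 2 + z ^ 2) / 2 + D * (x ^ 2 + z ^ 2) / 2 + D * (x ^ 2 + y ^ 2) / 2) / 2 -
          D * (x ^ 2 + z ^ 2) / 2) *
        ((D * ((y:ℝ) ^ 2 + z ^ 2) / 2 + D * (x ^ 2 + z ^ 2) / 2 + D * (x ^ 2 + y ^ 2) / 2) / 2 -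
          D * (x ^ 2 + y ^ 2) / 2)
        = ((D ^ 2 * x * y * z * t : ℝ) / 4) ^ 2 from by
      linear_combination ((D:ℝ) ^ 4 * x ^ 2 * y ^ 2 * z ^ 2 / 16) * et]
    exact Real.sqrt_sq (by positivity)
  · have pt : 0 < D ^ 2 * x * y * z * t := by positivity
    omega
  · have : (4 * m : ℝ) = D ^ 2 * x * y * z * t := by exact_mod_cast hm.symm
    linarith
end

section
/- Let D₁, D₂, D₃, d₁₂, d₁₃, d₂₃, k₁, k₂, k₃, k be positive integers satisfying the equation D₁·d₁₂·d₁₃·k₁² + D₂·d₁₂·d₂₃·k₂² + D₃·d₁₃·d₂₃·k₃² = D₁·D₂·D₃·k². Then at least one of the nine integers D₁, D₂, D₃, d₁₂, d₁₃, d₂₃, k₁, k₂, k₃ is even. -/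
def o (i : Fin 4) : ZMod 8 := 2 * (i : ℕ) + 1

lemma mem_o : ∀ x : ZMod 8, x ^ 2 = 1 → ∃ i, x = o i := by decide

set_option maxHeartbeats 2000000 in
lemma key : ∀ (i₁ i₂ i₃ i₄ i₅ i₆ : Fin 4) (s : ZMod 8),
    o i₁ * o i₄ * o i₅ + o i₂ * o i₄ * o i₆ + o i₃ * o i₅ * o i₆ ≠
      o i₁ * o i₂ * o i₃ * s ^ 2 := by decide

lemma odd_sq_zmod8 {n : ℕ} (h : Odd n) : ((n : ZMod 8)) ^ 2 = 1 := by
  obtain ⟨m, rfl⟩ := h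
  obtain ⟨t, ht⟩ := Nat.even_mul_succ_self m
  have h1 : ((2 * m + 1) : ℕ) ^ 2 = 8 * t + 1 := by
    have : (2 * m + 1) ^ 2 = 4 * (m * (m + 1)) + 1 := by ring
    rw [this, ht]; ring
  have : (((2 * m + 1) ^ 2 : ℕ) : ZMod 8) = ((8 * t + 1 : ℕ) : ZMod 8) := by rw [h1]
  push_cast at this ⊢
  rw [this]
  simp [show (8 : ZMod 8) = 0 from by decide]

theorem stmt_11 (D₁ D₂ D₃ d₁₂ d₁₃ d₂₃ k₁ k₂ k₃ k : ℕ)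
    (hD₁ : 0 < D₁) (hD₂ : 0 < D₂) (hD₃ : 0 < D₃)
    (hd₁₂ : 0 < d₁₂) (hd₁₃ : 0 < d₁₃) (hd₂₃ : 0 < d₂₃)
    (hk₁ : 0 < k₁) (hk₂ : 0 < k₂) (hk₃ : 0 < k₃) (hk : 0 < k)
    (heq : D₁ * d₁₂ * d₁₃ * k₁ ^ 2 + D₂ * d₁₂ * d₂₃ * k₂ ^ 2 +
      D₃ * d₁₃ * d₂₃ * k₃ ^ 2 = D₁ * D₂ * D₃ * k ^ 2) :
    Even D₁ ∨ Even D₂ ∨ Even D₃ ∨ Even d₁₂ ∨ Even d₁₃ ∨ Even d₂₃ ∨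
      Even k₁ ∨ Even k₂ ∨ Even k₃ := by
  by_contra h
  push_neg at h
  obtain ⟨h1, h2, h3, h4, h5, h6, h7, h8, h9⟩ := h
  rw [Nat.not_even_iff_odd] at h1 h2 h3 h4 h5 h6 h7 h8 h9
  obtain ⟨i₁, e1⟩ := mem_o _ (odd_sq_zmod8 h1)
  obtain ⟨i₂, e2⟩ := mem_o _ (odd_sq_zmod8 h2)
  obtain ⟨i₃, e3⟩ := mem_o _ (odd_sq_zmod8 h3)
  obtain ⟨i₄, e4⟩ := mem_o _ (odd_sq_zmod8 h4)
  obtain ⟨i₅, e5⟩ := mem_o _ (odd_sq_zmod8 h5)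
  obtain ⟨i₆, e6⟩ := mem_o _ (odd_sq_zmod8 h6)
  have e7 := odd_sq_zmod8 h7
  have e8 := odd_sq_zmod8 h8
  have e9 := odd_sq_zmod8 h9
  have hc : ((D₁ * d₁₂ * d₁₃ * k₁ ^ 2 + D₂ * d₁₂ * d₂₃ * k₂ ^ 2 +
      D₃ * d₁₃ * d₂₃ * k₃ ^ 2 : ℕ) : ZMod 8)
      = ((D₁ * D₂ * D₃ * k ^ 2 : ℕ) : ZMod 8) := by rw [heq]
  push_cast at hc
  rw [e1, e2, e3, e4, e5, e6, e7, e8, e9] at hc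
  apply key i₁ i₂ i₃ i₄ i₅ i₆ (k : ZMod 8)
  rw [← hc]; ring
end

section
/- Let x, y, z, t be positive integers with x² + y² + z² = t² and with y and z even. Then the numbers l = y/2, m = z/2, n = (t − x)/2 are positive integers such that n divides l² + m², n² < l² + m², and moreover x = (l² + m² − n²)/n, t = (l² + m² + n²)/n. -/
theorem stmt_13 (x y z t : ℕ) (hx : 0 < x) (hy : 0 < y) (hz : 0 < z) (ht : 0 < t)
    (heq : x ^ 2 + y ^ 2 + z ^ 2 = t ^ 2) (hyE : Even y) (hzE : Even z) :
    0 < y / 2 ∧ 0 < z / 2 ∧ 0 < (t - x) / 2 ∧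
      (t - x) / 2 ∣ (y / 2) ^ 2 + (z / 2) ^ 2 ∧
      ((t - x) / 2) ^ 2 < (y / 2) ^ 2 + (z / 2) ^ 2 ∧
      x = ((y / 2) ^ 2 + (z / 2) ^ 2 - ((t - x) / 2) ^ 2) / ((t - x) / 2) ∧
      t = ((y / 2) ^ 2 + (z / 2) ^ 2 + ((t - x) / 2) ^ 2) / ((t - x) / 2) := by
  obtain ⟨l, hl⟩ := hyE
  obtain ⟨m, hm⟩ := hzE
  subst hl hm
  have hl2 : (l + l) / 2 = l := by omega
  have hm2 : (m + m) / 2 = m := by omega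
  rw [hl2, hm2]
  have e1 : (l + l) ^ 2 = 4 * l ^ 2 := by ring
  have e2 : (m + m) ^ 2 = 4 * m ^ 2 := by ring
  -- t > x
  have htx : x < t := by
    have : x ^ 2 < t ^ 2 := by nlinarith
    exact lt_of_pow_lt_pow_left₀ 2 (Nat.zero_le _) this
  -- t - x is even
  have hpar : (t - x) % 2 = 0 := by
    have h1 : Even (x ^ 2) ↔ Even x := by simp [Nat.even_pow]
    have h2 : Even (t ^ 2) ↔ Even t := by simp [Nat.even_pow]
    simp [Nat.even_iff] at h1 h2
    omega
  obtain ⟨n, hnval⟩ : ∃ n, t = x + 2 * n := ⟨(t - x) / 2, by omega⟩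
  subst hnval
  have hd : (x + 2 * n - x) / 2 = n := by omega
  rw [hd]
  have hn0 : 0 < n := by omega
  -- key identity
  have expand : (x + 2 * n) ^ 2 = x ^ 2 + 4 * (n * x) + 4 * n ^ 2 := by ring
  have key : n * x + n ^ 2 = l ^ 2 + m ^ 2 := by omega
  have hnx : 0 < n * x := Nat.mul_pos hn0 hx
  refine ⟨by omega, by omega, hn0, ⟨x + n, by rw [← key]; ring⟩, by omega, ?_, ?_⟩
  · have h : l ^ 2 + m ^ 2 - n ^ 2 = n * x := by omega
    rw [h, Nat.mul_div_cancel_left _ hn0]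
  · have h : l ^ 2 + m ^ 2 + n ^ 2 = n * (x + 2 * n) := by
      have : n * (x + 2 * n) = n * x + 2 * n ^ 2 := by ring
      omega
    rw [h, Nat.mul_div_cancel_left _ hn0]
end
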